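/- arXiv:2403.12567 — 2 statements merged into one kernel-verified Lean document; each statement's English description precedes it below -/
import Mathlib

section
/- Let E be a real normed vector space, let x : [0,∞) → E, let δ : [0,∞) → ℝ be nonnegative and bounded, let β : ℝ × ℝ → ℝ, and let γ : ℝ → ℝ be nondecreasing with γ(0) = 0 and γ continuous at 0. Assume: (i) for all 0 ≤ t₀ ≤ t, ‖x(t)‖ ≤ β(‖x(t₀)‖, t − t₀) + γ(sup_{s∈[t₀,t]} δ(s)); (ii) β is nondecreasing in its first argument, nonincreasing in its second argument, and for every fixed r ≥ 0, β(r, t) → 0 as t → ∞; (iii) δ(t) → 0 as t → ∞. Then ‖x(t)‖ → 0 as t → ∞. -/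
open Set Filter

/-- Proposition 1 (Performance of the ETM), second part: under a uniform ISS bound
(from every initial time) with vanishing event threshold `δ(t) → 0`, the consensus
error converges to zero. -/
theorem stmt_2
    {E : Type*} [NormedAddCommGroup E] [NormedSpace ℝ E]
    (x : ℝ → E) (δ : ℝ → ℝ) (β : ℝ × ℝ → ℝ) (γ : ℝ → ℝ)
    (hδ0 : ∀ t, 0 ≤ t → 0 ≤ δ t)
    (hδbdd : ∃ M, ∀ t, 0 ≤ t → δ t ≤ M)
    (hγ : Monotone γ) (hγ0 : γ 0 = 0) (hγcont : ContinuousAt γ 0)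
    (hISS : ∀ t₀ t, 0 ≤ t₀ → t₀ ≤ t →
      ‖x t‖ ≤ β (‖x t₀‖, t - t₀) + γ (sSup (δ '' Icc t₀ t)))
    (hβ_mono : ∀ s, Monotone fun r => β (r, s))
    (hβ_anti : ∀ r, Antitone fun s => β (r, s))
    (hβ_lim : ∀ r, 0 ≤ r → Tendsto (fun s => β (r, s)) atTop (nhds 0))
    (hδlim : Tendsto δ atTop (nhds 0)) :
    Tendsto (fun t => ‖x t‖) atTop (nhds 0) := by
  rw [Metric.tendsto_atTop]
  intro ε hε
  obtain ⟨η', hη', hγη'⟩ := Metric.continuousAt_iff.mp hγcont (ε/2) (by positivity)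
  set η := η'/2 with hηdef
  have hηpos : 0 < η := by positivity
  have hγηnn : 0 ≤ γ η := by rw [← hγ0]; exact hγ hηpos.le
  have hγη : γ η < ε/2 := by
    have h1 : dist η (0:ℝ) < η' := by
      rw [Real.dist_eq, sub_zero, abs_of_pos hηpos]; linarith
    have := hγη' h1
    rw [Real.dist_eq, hγ0, sub_zero, abs_of_nonneg hγηnn] at this
    exact this
  obtain ⟨t₁, ht₁⟩ := Metric.tendsto_atTop.mp hδlim η hηpos
  set t₀ := max t₁ 0 with ht₀def
  have ht₀0 : (0:ℝ) ≤ t₀ := le_max_right _ _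
  have hδsmall : ∀ s, t₀ ≤ s → δ s ≤ η := by
    intro s hs
    have := ht₁ s (le_trans (le_max_left _ _) hs)
    rw [Real.dist_eq, sub_zero] at this
    exact (abs_le.mp this.le).2
  have hβt : Tendsto (fun t => β (‖x t₀‖, t - t₀)) atTop (nhds 0) := by
    have h2 : Tendsto (fun t : ℝ => t - t₀) atTop atTop :=
      tendsto_atTop_add_const_right _ (-t₀) tendsto_id
    exact (hβ_lim ‖x t₀‖ (norm_nonneg _)).comp h2
  obtain ⟨T, hT⟩ := Metric.tendsto_atTop.mp hβt (ε/2) (by positivity)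
  refine ⟨max T t₀, fun t ht => ?_⟩
  have htT : T ≤ t := le_trans (le_max_left _ _) ht
  have htt₀ : t₀ ≤ t := le_trans (le_max_right _ _) ht
  have hβlt : β (‖x t₀‖, t - t₀) < ε/2 := by
    have := hT t htT
    rw [Real.dist_eq, sub_zero] at this
    exact lt_of_le_of_lt (le_abs_self _) this
  have hsup : sSup (δ '' Icc t₀ t) ≤ η := by
    apply Real.sSup_le
    · rintro y ⟨s, hs, rfl⟩
      exact hδsmall s hs.1
    · exact hηpos.le
  have hγsup : γ (sSup (δ '' Icc t₀ t)) ≤ γ η := hγ hsup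
  have hx : ‖x t‖ ≤ β (‖x t₀‖, t - t₀) + γ (sSup (δ '' Icc t₀ t)) :=
    hISS t₀ t ht₀0 htt₀
  have : ‖x t‖ < ε := by linarith
  rw [Real.dist_eq, sub_zero, abs_of_nonneg (norm_nonneg _)]
  exact this
end

section
/- Let N ≥ 1, let Q be a real symmetric N×N matrix with Q𝟙 = 0 (𝟙 ∈ ℝ^N the all-ones vector), let λ₂ > 0 satisfy vᵀQv ≥ λ₂‖v‖² for every v ∈ ℝ^N with 𝟙ᵀv = 0, and let λ_max ≥ 0 satisfy ‖Qv‖ ≤ λ_max‖v‖ for every v ∈ ℝ^N. Let H = I_N − (1/N)𝟙𝟙ᵀ, let κ > 0, R ≥ 0, σ ≥ 0, ε > 0. Let r : ℝ → ℝ^N be continuously differentiable with |ṙ_i(t)| ≤ R for every i and t ≥ 0, let u : ℝ → ℝ^N be continuous with |u_i(t)| ≤ σ·η_i(t) + ε for some functions η_i : [0,∞) → [0,1], and let x : ℝ → ℝ^N be differentiable with ẋ(t) = H·ṙ(t) − κQ·x(t) − κQ·u(t) and H·x(t) = x(t) for all t ≥ 0. Then for every t ≥ 0, ‖x(t)‖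 ≤ exp(−κλ₂t)·‖x(0)‖ + (λ_max/λ₂)·√N·(σ + ε) + √N·R/(κλ₂). -/
open Set

/-- The action of a matrix on Euclidean space (matrix-vector product, with the
Euclidean norm on vectors). -/
noncomputable def euclMulVec {N : ℕ} (M : Matrix (Fin N) (Fin N) ℝ)
    (v : EuclideanSpace ℝ (Fin N)) : EuclideanSpace ℝ (Fin N) :=
  Matrix.toEuclideanCLM (𝕜 := ℝ) M v

open scoped RealInnerProductSpace

/-!
Every term of `ẋ = H ṙ − κQx − κQu` is controlled along `x`: since `Hx = x` the coordinates of
`x` sum to zero, so `⟪x, Hṙ⟫ = ⟪x, ṙ⟫` and `⟪x, Qx⟫ ≥ λ₂‖x‖²`, while the mismatch term is bounded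
through `λ_max` and the NN-ETM thresholds `|u_i| ≤ σ + ε`. Hence `⟪x, ẋ⟫ ≤ −κλ₂‖x‖² + C‖x‖` with
`C = √N R + κ λ_max √N (σ + ε)`, and a comparison argument for `e^{κλ₂ t} x(t)` (smoothing the
norm as `√(‖·‖² + δ²)` to differentiate it) gives `‖x(t)‖ ≤ e^{−κλ₂ t}‖x(0)‖ + C/(κλ₂)`.
-/

section NormGrowth

variable {E : Type*} [NormedAddCommGroup E] [InnerProductSpace ℝ E]

lemma hasDerivAt_sqrt_norm_sq_add_sq {y : ℝ → E} {y' : E} {s δ : ℝ} (hy : HasDerivAt y y' s)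
    (hδ : δ ≠ 0) :
    HasDerivAt (fun s => √(‖y s‖ ^ 2 + δ ^ 2)) (⟪y s, y'⟫ / √(‖y s‖ ^ 2 + δ ^ 2)) s := by
  convert (HasDerivAt.add_const (δ ^ 2) hy.norm_sq).sqrt (by positivity) using 1
  ring

lemma norm_sub_norm_le_of_inner_deriv_le {y : ℝ → E} {y' : ℝ → E} {B b : ℝ → ℝ} {a c : ℝ}
    (hac : a ≤ c) (hyc : ContinuousOn y (Icc a c)) (hBc : ContinuousOn B (Icc a c))
    (hy : ∀ s ∈ Ioo a c, HasDerivAt y (y' s) s) (hB : ∀ s ∈ Ioo a c, HasDerivAt B (b s) s)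
    (hb : ∀ s ∈ Ioo a c, 0 ≤ b s)
    (hinner : ∀ s ∈ Ioo a c, ⟪y s, y' s⟫ ≤ b s * ‖y s‖) :
    ‖y c‖ - ‖y a‖ ≤ B c - B a := by
  refine le_of_forall_pos_le_add fun δ hδ => ?_
  set ρ : ℝ → ℝ := fun s => √(‖y s‖ ^ 2 + δ ^ 2)
  have hρ_pos : ∀ s, 0 < ρ s := fun s => by positivity
  have hnorm_le_ρ : ∀ s, ‖y s‖ ≤ ρ s := fun s =>
    (Real.le_sqrt (norm_nonneg _) (by positivity)).mpr (by nlinarith)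
  have hmono : MonotoneOn (fun s => B s - ρ s) (Icc a c) := by
    refine monotoneOn_of_hasDerivWithinAt_nonneg (convex_Icc a c)
      (f' := fun s => b s - ⟪y s, y' s⟫ / ρ s)
      (hBc.sub (hyc.norm.pow 2 |>.add continuousOn_const).sqrt) (fun s hs => ?_) fun s hs => ?_
    · rw [interior_Icc] at hs
      exact ((hB s hs).sub (hasDerivAt_sqrt_norm_sq_add_sq (hy s hs) hδ.ne')).hasDerivWithinAt
    · rw [interior_Icc] at hs
      rw [sub_nonneg, div_le_iff₀ (hρ_pos s)]
      calc ⟪y s, y' s⟫ ≤ b s * ‖y s‖ := hinner s hs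
        _ ≤ b s * ρ s := mul_le_mul_of_nonneg_left (hnorm_le_ρ s) (hb s hs)
  have hρa : ρ a ≤ ‖y a‖ + δ :=
    Real.sqrt_le_iff.mpr ⟨by positivity, by nlinarith [norm_nonneg (y a)]⟩
  have := hmono (left_mem_Icc.mpr hac) (right_mem_Icc.mpr hac) hac
  linarith [hnorm_le_ρ c]

/-- The norm of `e^{as} x(s)` grows at rate at most `C e^{as}`. -/
lemma norm_le_exp_mul_add_of_inner_deriv_le {x x' : ℝ → E} {a C t : ℝ} (ha : 0 < a) (hC : 0 ≤ C)
    (ht : 0 ≤ t) (hx : ∀ s ∈ Icc 0 t, HasDerivAt x (x' s) s)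
    (hinner : ∀ s ∈ Icc 0 t, ⟪x s, x' s⟫ ≤ -(a * ‖x s‖ ^ 2) + C * ‖x s‖) :
    ‖x t‖ ≤ Real.exp (-(a * t)) * ‖x 0‖ + C / a := by
  have hexp : ∀ s, HasDerivAt (fun s => Real.exp (a * s)) (Real.exp (a * s) * a) s := fun s => by
    simpa using ((hasDerivAt_id s).const_mul a).exp
  have hgrowth := norm_sub_norm_le_of_inner_deriv_le (y := fun s => Real.exp (a * s) • x s)
    (y' := fun s => Real.exp (a * s) • (x' s + a • x s)) (B := fun s => C / a * Real.exp (a * s))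
    (b := fun s => C * Real.exp (a * s)) ht
    (fun s hs => ((hexp s).continuousAt.smul (hx s hs).continuousAt).continuousWithinAt)
    (by fun_prop)
    (fun s hs => ((hexp s).smul (hx s (Ioo_subset_Icc_self hs))).congr_deriv (by
      rw [smul_add, smul_smul]))
    (fun s _ => ((hexp s).const_mul (C / a)).congr_deriv (by field_simp))
    (fun s _ => by positivity)
    (fun s hs => by
      have hxs := hinner s (Ioo_subset_Icc_self hs)
      have hE := Real.exp_pos (a * s)
      simp only [real_inner_smul_left, real_inner_smul_right, inner_add_right,
        real_inner_self_eq_norm_sq, norm_smul, Real.norm_eq_abs, abs_of_pos hE]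
      nlinarith [mul_le_mul_of_nonneg_left hxs (mul_pos hE hE).le])
  simp only [norm_smul, Real.norm_eq_abs, abs_of_pos (Real.exp_pos _), mul_zero, Real.exp_zero,
    mul_one] at hgrowth
  have hE : Real.exp (-(a * t)) * Real.exp (a * t) = 1 := by rw [← Real.exp_add]; simp
  have hCa : 0 ≤ C / a := div_nonneg hC ha.le
  calc ‖x t‖ = Real.exp (-(a * t)) * (Real.exp (a * t) * ‖x t‖) := by rw [← mul_assoc, hE, one_mul]
    _ ≤ Real.exp (-(a * t)) * (‖x 0‖ + C / a * Real.exp (a * t) - C / a) := by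
      gcongr; linarith
    _ = Real.exp (-(a * t)) * ‖x 0‖ + C / a - Real.exp (-(a * t)) * (C / a) := by
      linear_combination (C / a) * hE
    _ ≤ Real.exp (-(a * t)) * ‖x 0‖ + C / a := by
      linarith [mul_nonneg (Real.exp_pos (-(a * t))).le hCa]

end NormGrowth

section Consensus

variable {n : ℕ}

noncomputable def centeringMatrix (n : ℕ) : Matrix (Fin n) (Fin n) ℝ :=
  1 - (n : ℝ)⁻¹ • Matrix.of (fun _ _ => (1 : ℝ))

lemma euclMulVec_apply (M : Matrix (Fin n) (Fin n) ℝ) (v : EuclideanSpace ℝ (Fin n)) (i : Fin n) :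
    euclMulVec M v i = M.mulVec (fun j => v j) i := rfl

lemma inner_eq_sum (v w : EuclideanSpace ℝ (Fin n)) : ⟪v, w⟫ = ∑ i, v i * w i := by
  simp [PiLp.inner_apply, mul_comm]

lemma euclMulVec_centeringMatrix_apply (v : EuclideanSpace ℝ (Fin n)) (i : Fin n) :
    euclMulVec (centeringMatrix n) v i = v i - (n : ℝ)⁻¹ * ∑ j, v j := by
  simp [euclMulVec_apply, centeringMatrix, Matrix.mulVec, dotProduct, Matrix.sub_apply,
    Matrix.one_apply, sub_mul, Finset.sum_sub_distrib, Finset.mul_sum, ite_mul]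

lemma sum_eq_zero_of_euclMulVec_centeringMatrix_eq {v : EuclideanSpace ℝ (Fin n)}
    (hv : euclMulVec (centeringMatrix n) v = v) : ∑ i, v i = 0 := by
  rcases n with _ | n
  · simp
  · have h := congrArg (· 0) hv
    simp only [euclMulVec_centeringMatrix_apply, sub_eq_self, mul_eq_zero, inv_eq_zero] at h
    exact h.resolve_left (by positivity)

lemma inner_euclMulVec_centeringMatrix {v : EuclideanSpace ℝ (Fin n)} (hv : ∑ i, v i = 0)
    (w : EuclideanSpace ℝ (Fin n)) :
    ⟪v, euclMulVec (centeringMatrix n) w⟫ = ⟪v, w⟫ := by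
  simp only [inner_eq_sum, euclMulVec_centeringMatrix_apply, mul_sub, Finset.sum_sub_distrib,
    ← Finset.sum_mul, hv, zero_mul, sub_zero]

lemma norm_le_sqrt_mul_of_abs_le {v : EuclideanSpace ℝ (Fin n)} {c : ℝ} (hc : 0 ≤ c)
    (h : ∀ i, |v i| ≤ c) : ‖v‖ ≤ √n * c := by
  rw [EuclideanSpace.norm_eq, ← Real.sqrt_sq hc, ← Real.sqrt_mul n.cast_nonneg]
  gcongr
  calc ∑ i, ‖v i‖ ^ 2 ≤ ∑ _i : Fin n, c ^ 2 :=
        Finset.sum_le_sum fun i _ => by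
          rw [Real.norm_eq_abs, sq_abs]; exact sq_le_sq' (abs_le.mp (h i)).1 (abs_le.mp (h i)).2
    _ = n * c ^ 2 := by simp

lemma inner_consensus_field_le {Q : Matrix (Fin n) (Fin n) ℝ} {lam2 lamMax κ ρ μ : ℝ}
    (hQquad : ∀ v : EuclideanSpace ℝ (Fin n), (∑ i, v i) = 0 →
      lam2 * ‖v‖ ^ 2 ≤ ∑ i, v i * Q.mulVec (fun j => v j) i)
    (hQbound : ∀ v : EuclideanSpace ℝ (Fin n), ‖euclMulVec Q v‖ ≤ lamMax * ‖v‖)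
    (hlamMax : 0 ≤ lamMax) (hκ : 0 ≤ κ) {x r u : EuclideanSpace ℝ (Fin n)} (hx : ∑ i, x i = 0)
    (hr : ‖r‖ ≤ ρ) (hu : ‖u‖ ≤ μ) :
    ⟪x, euclMulVec (centeringMatrix n) r - κ • euclMulVec Q x - κ • euclMulVec Q u⟫
      ≤ -(κ * lam2 * ‖x‖ ^ 2) + (ρ + κ * (lamMax * μ)) * ‖x‖ := by
  have hdrift : ⟪x, r⟫ ≤ ρ * ‖x‖ :=
    (real_inner_le_norm x r).trans (by nlinarith [norm_nonneg x])
  have hcoercive : lam2 * ‖x‖ ^ 2 ≤ ⟪x, euclMulVec Q x⟫ := by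
    rw [inner_eq_sum]; exact hQquad x hx
  have hmismatch : -(lamMax * μ * ‖x‖) ≤ ⟪x, euclMulVec Q u⟫ := by
    have := (abs_real_inner_le_norm x (euclMulVec Q u)).trans
      (mul_le_mul_of_nonneg_left ((hQbound u).trans (mul_le_mul_of_nonneg_left hu hlamMax))
        (norm_nonneg x))
    linarith [neg_abs_le ⟪x, euclMulVec Q u⟫]
  rw [inner_sub_right, inner_sub_right, real_inner_smul_right, real_inner_smul_right,
    inner_euclMulVec_centeringMatrix hx]
  nlinarith [mul_le_mul_of_nonneg_left hcoercive hκ, mul_le_mul_of_nonneg_left hmismatch hκ]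

end Consensus

theorem stmt_11_general (N : ℕ)
    (Q : Matrix (Fin N) (Fin N) ℝ)
    (lam2 lamMax : ℝ) (hlam2 : 0 < lam2) (hlamMax : 0 ≤ lamMax)
    (hQquad : ∀ v : EuclideanSpace ℝ (Fin N), (∑ i, v i) = 0 →
      lam2 * ‖v‖ ^ 2 ≤ ∑ i, v i * Q.mulVec (fun j => v j) i)
    (hQbound : ∀ v : EuclideanSpace ℝ (Fin N), ‖euclMulVec Q v‖ ≤ lamMax * ‖v‖)
    (H : Matrix (Fin N) (Fin N) ℝ)
    (hH : H = 1 - (N : ℝ)⁻¹ • Matrix.of (fun _ _ => (1 : ℝ)))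
    (κ R σ ε : ℝ) (hκ : 0 < κ) (hR : 0 ≤ R) (hσ : 0 ≤ σ) (hε : 0 < ε)
    (r' : ℝ → EuclideanSpace ℝ (Fin N))
    (hr'bdd : ∀ i : Fin N, ∀ t, 0 ≤ t → |r' t i| ≤ R)
    (u : ℝ → EuclideanSpace ℝ (Fin N))
    (η : Fin N → ℝ → ℝ)
    (hη : ∀ i : Fin N, ∀ t, 0 ≤ t → η i t ∈ Icc (0 : ℝ) 1)
    (hubound : ∀ i : Fin N, ∀ t, 0 ≤ t → |u t i| ≤ σ * η i t + ε)
    (x : ℝ → EuclideanSpace ℝ (Fin N))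
    (hx : ∀ t, 0 ≤ t → HasDerivAt x
      (euclMulVec H (r' t) - κ • euclMulVec Q (x t) - κ • euclMulVec Q (u t)) t)
    (hHx : ∀ t, 0 ≤ t → euclMulVec H (x t) = x t) :
    ∀ t, 0 ≤ t →
      ‖x t‖ ≤ Real.exp (-(κ * lam2 * t)) * ‖x 0‖
        + (lamMax / lam2) * (Real.sqrt N * (σ + ε))
        + Real.sqrt N * R / (κ * lam2) := by
  intro t ht
  change H = centeringMatrix N at hH
  subst hH
  have hr'norm : ∀ s, 0 ≤ s → ‖r' s‖ ≤ √N * R := fun s hs =>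
    norm_le_sqrt_mul_of_abs_le hR fun i => hr'bdd i s hs
  have hunorm : ∀ s, 0 ≤ s → ‖u s‖ ≤ √N * (σ + ε) := fun s hs =>
    norm_le_sqrt_mul_of_abs_le (by positivity) fun i =>
      (hubound i s hs).trans (by nlinarith [(hη i s hs).2])
  have hdecay := norm_le_exp_mul_add_of_inner_deriv_le (mul_pos hκ hlam2)
    (C := √N * R + κ * (lamMax * (√N * (σ + ε)))) (by positivity) ht (fun s hs => hx s hs.1)
    fun s hs => by
      have := inner_consensus_field_le hQquad hQbound hlamMax hκ.le
        (sum_eq_zero_of_euclMulVec_centeringMatrix_eq (hHx s hs.1)) (hr'norm s hs.1)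
        (hunorm s hs.1)
      linarith
  refine hdecay.trans_eq ?_
  field_simp
  ring

/-- NN-ETM particularization of Theorem 2: with communication mismatches bounded
by the NN-ETM thresholds `|u_i(t)| ≤ σ·η_i(t) + ε`, `η_i(t) ∈ [0,1]`, the
disagreement of the linear dynamic consensus protocol satisfies
`‖x(t)‖ ≤ e^{−κλ₂t}‖x(0)‖ + (λ_max/λ₂)·√N·(σ+ε) + √N·R/(κλ₂)`. -/
theorem stmt_11 (N : ℕ) (hN : 1 ≤ N)
    (Q : Matrix (Fin N) (Fin N) ℝ) (hQsymm : Q.IsSymm)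
    (hQone : Q.mulVec (fun _ => (1 : ℝ)) = 0)
    (lam2 lamMax : ℝ) (hlam2 : 0 < lam2) (hlamMax : 0 ≤ lamMax)
    (hQquad : ∀ v : EuclideanSpace ℝ (Fin N), (∑ i, v i) = 0 →
      lam2 * ‖v‖ ^ 2 ≤ ∑ i, v i * Q.mulVec (fun j => v j) i)
    (hQbound : ∀ v : EuclideanSpace ℝ (Fin N), ‖euclMulVec Q v‖ ≤ lamMax * ‖v‖)
    (H : Matrix (Fin N) (Fin N) ℝ)
    (hH : H = 1 - (N : ℝ)⁻¹ • Matrix.of (fun _ _ => (1 : ℝ)))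
    (κ R σ ε : ℝ) (hκ : 0 < κ) (hR : 0 ≤ R) (hσ : 0 ≤ σ) (hε : 0 < ε)
    (r r' : ℝ → EuclideanSpace ℝ (Fin N))
    (hr : ∀ t, HasDerivAt r (r' t) t) (hr'cont : Continuous r')
    (hr'bdd : ∀ i : Fin N, ∀ t, 0 ≤ t → |r' t i| ≤ R)
    (u : ℝ → EuclideanSpace ℝ (Fin N)) (hu : Continuous u)
    (η : Fin N → ℝ → ℝ)
    (hη : ∀ i : Fin N, ∀ t, 0 ≤ t → η i t ∈ Icc (0 : ℝ) 1)
    (hubound : ∀ i : Fin N, ∀ t, 0 ≤ t → |u t i| ≤ σ * η i t + ε)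
    (x : ℝ → EuclideanSpace ℝ (Fin N))
    (hx : ∀ t, 0 ≤ t → HasDerivAt x
      (euclMulVec H (r' t) - κ • euclMulVec Q (x t) - κ • euclMulVec Q (u t)) t)
    (hHx : ∀ t, 0 ≤ t → euclMulVec H (x t) = x t) :
    ∀ t, 0 ≤ t →
      ‖x t‖ ≤ Real.exp (-(κ * lam2 * t)) * ‖x 0‖
        + (lamMax / lam2) * (Real.sqrt N * (σ + ε))
        + Real.sqrt N * R / (κ * lam2) :=
  stmt_11_general N Q lam2 lamMax hlam2 hlamMax hQquad hQbound H hH κ R σ ε hκ hR hσ hε r' hr'bdd u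
    η hη hubound x hx hHx
end
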